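/- arXiv:1705.01609 — 3 statements merged into one kernel-verified Lean document; each statement's English description precedes it below -/
import Mathlib

section
/- Let K be a field of characteristic p with a p-basis a_1, ..., a_r over a perfect field k, and let E ⊆ K be an intermediate field such that a_1, ..., a_m (m ≤ r) form a p-basis of E over k. Then for every n ≥ 0 the natural map Ω^n_E → Ω^n_K induced by inclusion is injective. -/
/-- The additive subgroup of `n`-forms `b·dc₁ ∧ ⋯ ∧ dc_n` inside the exterior algebra of the
absolute Kähler differentials of a field `F`. -/
noncomputable def nForms (F : Type) [Field F] (n : ℕ) :
    AddSubgroup (ExteriorAlgebra F (KaehlerDifferential ℤ F)) :=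
  AddSubgroup.closure
    {x | ∃ (b : F) (c : Fin n → F),
      x = b • ExteriorAlgebra.ιMulti F n fun i => KaehlerDifferential.D ℤ F (c i)}

/-!
Over `Kᵖ` the monomials `a^α` with exponents `0 ≤ αᵢ < p` form a basis of `K`, and the
`Kᵖ`-linear operator `θⱼ` scaling `a^α` by `αⱼ` is a derivation: on monomials the Leibniz rule
only says that the exponent `αⱼ` is additive, which holds modulo `p`. The derivations `aⱼ⁻¹ θⱼ`
are dual to `da₁, …, da_r`, so these are linearly independent in `Ω_K`, and hence so are their
ordered wedge products. On the other side `d` kills `Eᵖ ⊇ k`, so `Ω_E` is spanned by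
`da₁, …, da_m`; every `n`-form over `E` is thus a combination of ordered wedge products of the
`daᵢ`, and the inclusion sends it to the same combination over `K`.
-/

open Set Module KaehlerDifferential

theorem Subfield.subset_image_frobenius {K : Type*} [Field K] (p : ℕ) [ExpChar K p]
    (k : Subfield K) [PerfectRing k p] : (k : Set K) ⊆ frobenius K p '' k := fun x hx => by
  obtain ⟨y, hy⟩ := surjective_frobenius k p ⟨x, hx⟩
  exact ⟨y, y.2, congrArg Subtype.val hy⟩

theorem Subfield.closure_range_frobenius_union_eq_top {K : Type*} [Field K] (p : ℕ) [ExpChar K p]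
    (k E : Subfield K) [PerfectRing k p] (hkE : k ≤ E) [ExpChar E p] {ι : Type*} (b : ι → E)
    (h : (E : Set K) ⊆ closure ((k : Set K) ∪ (fun x : K => x ^ p) '' (E : Set K) ∪
      range fun i => (b i : K))) :
    closure (range (frobenius E p) ∪ range b) = ⊤ := by
  have hle : closure ((k : Set K) ∪ (fun x : K => x ^ p) '' (E : Set K) ∪
      range fun i => (b i : K)) ≤ (closure (range (frobenius E p) ∪ range b)).map E.subtype := by
    rw [closure_le]
    rintro _ ((hz | ⟨y, hy, rfl⟩) | ⟨i, rfl⟩)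
    · obtain ⟨y, hy, rfl⟩ := subset_image_frobenius p k hz
      exact ⟨frobenius E p ⟨y, hkE hy⟩, subset_closure (.inl ⟨_, rfl⟩), rfl⟩
    · exact ⟨frobenius E p ⟨y, hy⟩, subset_closure (.inl ⟨_, rfl⟩), rfl⟩
    · exact ⟨b i, subset_closure (.inr ⟨i, rfl⟩), rfl⟩
  refine eq_top_iff.2 fun x _ => ?_
  obtain ⟨y, hy, hyx⟩ := hle (h x.2)
  rwa [← Subtype.ext hyx]

theorem KaehlerDifferential.span_range_D_eq_top {L : Type*} [Field L] (p : ℕ) [Fact p.Prime]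
    [CharP L p] {ι : Type*} (b : ι → L)
    (hgen : Subfield.closure (range (frobenius L p) ∪ range b) = ⊤) :
    Submodule.span L (range fun i => D ℤ L (b i)) = ⊤ := by
  set N := Submodule.span L (range fun i => D ℤ L (b i))
  let S : Subfield L :=
    { carrier := {x | D ℤ L x ∈ N}
      mul_mem' := fun {x y} hx hy => by
        simpa only [mem_ofPred_eq, Derivation.leibniz] using
          N.add_mem (N.smul_mem x hy) (N.smul_mem y hx)
      one_mem' := by simp
      add_mem' := fun hx hy => by simpa only [mem_ofPred_eq, map_add] using N.add_mem hx hy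
      zero_mem' := by simp
      neg_mem' := fun hx => by simpa only [mem_ofPred_eq, map_neg] using N.neg_mem hx
      inv_mem' := fun x hx => by
        simpa only [mem_ofPred_eq, Derivation.leibniz_inv] using N.smul_mem _ hx }
  have hS : Subfield.closure (range (frobenius L p) ∪ range b) ≤ S := by
    rw [Subfield.closure_le]
    rintro _ (⟨x, rfl⟩ | ⟨i, rfl⟩)
    · show D ℤ L (x ^ p) ∈ N
      rw [Derivation.leibniz_pow, ← Nat.cast_smul_eq_nsmul L, CharP.cast_eq_zero, zero_smul]
      exact N.zero_mem
    · exact Submodule.subset_span ⟨i, rfl⟩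
  rw [eq_top_iff, ← span_range_derivation, Submodule.span_le]
  rintro _ ⟨x, rfl⟩
  exact hS (hgen ▸ Subfield.mem_top x)

structure IsPBasis {K : Type*} [Field K] (p : ℕ) [ExpChar K p] {ι : Type*} [Fintype ι]
    (a : ι → K) : Prop where
  closure_eq_top : Subfield.closure (range (frobenius K p) ∪ range a) = ⊤
  finrank_eq : finrank (frobenius K p).fieldRange K = p ^ Fintype.card ι

def pMonomial {K : Type*} [Field K] {ι : Type*} [Fintype ι] (a : ι → K) (p : ℕ)
    (α : ι → Fin p) : K :=
  ∏ i, a i ^ (α i : ℕ)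

namespace IsPBasis

variable {K : Type*} [Field K] {p : ℕ} [hp : Fact p.Prime] [CharP K p] {ι : Type*} [Fintype ι]
  {a : ι → K}

variable (p) in
theorem prod_pow_eq_frobenius_mul_pMonomial (a : ι → K) (n : ι → ℕ) :
    ∏ i, a i ^ n i =
      frobenius K p (∏ i, a i ^ (n i / p)) *
        pMonomial a p fun i => ⟨n i % p, Nat.mod_lt _ hp.out.pos⟩ := by
  rw [map_prod, pMonomial, ← Finset.prod_mul_distrib]
  refine Finset.prod_congr rfl fun i _ => ?_
  rw [frobenius_def, ← pow_mul, ← pow_add]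
  congr 1
  exact (Nat.div_add_mod' (n i) p).symm

theorem span_pMonomial_eq_top (ha : IsPBasis p a) :
    Submodule.span (frobenius K p).fieldRange (range (pMonomial a p)) = ⊤ := by
  set F := (frobenius K p).fieldRange
  have : FiniteDimensional F K :=
    Module.finite_of_finrank_pos (by rw [ha.finrank_eq]; exact pow_pos hp.out.pos _)
  have hadjoin : IntermediateField.adjoin F (range a) = ⊤ := by
    rw [← IntermediateField.toSubfield_inj, IntermediateField.adjoin_toSubfield,
      IntermediateField.top_toSubfield, ← ha.closure_eq_top]
    congr 2
    exact Subtype.range_val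
  have halg : Algebra.adjoin F (range a) = ⊤ := by
    rw [← IntermediateField.adjoin_toSubalgebra_of_isAlgebraic
      (fun x _ => Algebra.IsAlgebraic.isAlgebraic x), hadjoin, IntermediateField.top_toSubalgebra]
  rw [eq_top_iff, ← Algebra.top_toSubmodule, ← halg, Algebra.adjoin_eq_span, Submodule.span_le]
  intro x hx
  obtain ⟨n, rfl⟩ := Submonoid.mem_closure_range_iff_of_fintype.1 hx
  rw [prod_pow_eq_frobenius_mul_pMonomial p]
  exact Submodule.smul_mem _ (⟨_, RingHom.mem_fieldRange_self _ _⟩ : F)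
    (Submodule.subset_span (mem_range_self _))

section Basis

variable [DecidableEq ι]

noncomputable def pMonomialBasis (ha : IsPBasis p a) :
    Basis (ι → Fin p) (frobenius K p).fieldRange K :=
  basisOfTopLeSpanOfCardEqFinrank (pMonomial a p) ha.span_pMonomial_eq_top.ge
    (by simp [ha.finrank_eq])

theorem coe_pMonomialBasis (ha : IsPBasis p a) : ⇑ha.pMonomialBasis = pMonomial a p :=
  coe_basisOfTopLeSpanOfCardEqFinrank _ _ _

end Basis

theorem ne_zero (ha : IsPBasis p a) (i : ι) : a i ≠ 0 := by
  classical
  have h := ha.pMonomialBasis.ne_zero (Pi.single i ⟨1, hp.out.one_lt⟩)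
  rw [coe_pMonomialBasis, pMonomial, Finset.prod_eq_single i (fun j _ hj => by simp [hj])
    (by simp)] at h
  simpa using h

section Euler

variable [DecidableEq ι]

noncomputable def eulerOp (ha : IsPBasis p a) (j : ι) : K →ₗ[(frobenius K p).fieldRange] K :=
  ha.pMonomialBasis.constr (frobenius K p).fieldRange fun α => (α j : K) * pMonomial a p α

theorem eulerOp_pMonomial (ha : IsPBasis p a) (j : ι) (α : ι → Fin p) :
    ha.eulerOp j (pMonomial a p α) = (α j : K) * pMonomial a p α := by
  rw [eulerOp, ← coe_pMonomialBasis ha, Basis.constr_basis]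

theorem eulerOp_prod_pow (ha : IsPBasis p a) (j : ι) (n : ι → ℕ) :
    ha.eulerOp j (∏ i, a i ^ n i) = (n j : K) * ∏ i, a i ^ n i := by
  let c : (frobenius K p).fieldRange := ⟨_, RingHom.mem_fieldRange_self _ (∏ i, a i ^ (n i / p))⟩
  have h : ∏ i, a i ^ n i = c • pMonomial a p fun i => ⟨n i % p, Nat.mod_lt _ hp.out.pos⟩ :=
    prod_pow_eq_frobenius_mul_pMonomial p a n
  rw [h, map_smul, eulerOp_pMonomial, CharP.cast_eq_mod K p (n j), Subfield.smul_def,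
    Subfield.smul_def, smul_eq_mul, smul_eq_mul, mul_left_comm]

theorem eulerOp_mul (ha : IsPBasis p a) (j : ι) (x y : K) :
    ha.eulerOp j (x * y) = x * ha.eulerOp j y + y * ha.eulerOp j x := by
  let μ := LinearMap.mul (frobenius K p).fieldRange K
  suffices h : μ.compr₂ (ha.eulerOp j) =
      μ.compl₂ (ha.eulerOp j) + (μ.compl₂ (ha.eulerOp j)).flip from
    LinearMap.congr_fun₂ h x y
  refine LinearMap.ext_basis ha.pMonomialBasis ha.pMonomialBasis fun α β => ?_
  have hprod : pMonomial a p α * pMonomial a p β = ∏ i, a i ^ ((α i : ℕ) + β i) := by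
    simp only [pMonomial, ← Finset.prod_mul_distrib, pow_add]
  simp only [coe_pMonomialBasis, LinearMap.compr₂_apply, LinearMap.compl₂_apply,
    LinearMap.add_apply, LinearMap.flip_apply, LinearMap.mul_apply', μ]
  rw [hprod, eulerOp_prod_pow, eulerOp_pMonomial, eulerOp_pMonomial, ← hprod]
  push_cast
  ring

noncomputable def eulerDerivation (ha : IsPBasis p a) (j : ι) :
    Derivation (frobenius K p).fieldRange K K where
  toLinearMap := ha.eulerOp j
  map_one_eq_zero' := by simpa using ha.eulerOp_prod_pow j 0
  leibniz' x y := ha.eulerOp_mul j x y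

theorem eulerDerivation_apply (ha : IsPBasis p a) (i j : ι) :
    ha.eulerDerivation j (a i) = if i = j then a i else 0 := by
  have h := ha.eulerOp_prod_pow j (Pi.single i 1)
  simp only [Pi.single_apply, pow_ite, pow_one, pow_zero, Finset.prod_ite_eq', Finset.mem_univ,
    if_true] at h
  rw [eulerDerivation, Derivation.mk_coe, h]
  by_cases hij : i = j
  · simp [hij]
  · simp [hij, Ne.symm hij]

end Euler

theorem linearIndependent_D (ha : IsPBasis p a) :
    LinearIndependent K fun i => D ℤ K (a i) := by
  classical
  let ℓ : ι → Module.Dual K (KaehlerDifferential ℤ K) := fun j =>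
    ((a j)⁻¹ • (ha.eulerDerivation j).restrictScalars ℤ).liftKaehlerDifferential
  have hℓ : ∀ i j, ℓ j (D ℤ K (a i)) = if i = j then 1 else 0 := by
    intro i j
    by_cases hij : i = j
    · subst hij
      simp [ℓ, eulerDerivation_apply, inv_mul_cancel₀ (ha.ne_zero i)]
    · simp [ℓ, eulerDerivation_apply, hij]
  exact .of_pairwise_dual_eq_zero_one _ ℓ (fun j i hji => by simp [hℓ, Ne.symm hji])
    fun i => by simp [hℓ]

end IsPBasis

theorem nForms_le_exteriorPower (F : Type) [Field F] (n : ℕ) :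
    nForms F n ≤ (⋀[F]^n (KaehlerDifferential ℤ F)).toAddSubgroup := by
  rw [nForms, AddSubgroup.closure_le]
  rintro _ ⟨b, c, rfl⟩
  exact Submodule.smul_mem _ b (ExteriorAlgebra.ιMulti_range F n ⟨_, rfl⟩)

theorem injOn_nForms_of_linearIndependent {E K : Type} [Field E] [Field K] (f : E →+* K)
    {ι : Type*} [LinearOrder ι] [Fintype ι] (b : ι → E)
    (hspan : Submodule.span E (range fun i => D ℤ E (b i)) = ⊤)
    (hind : LinearIndependent K fun i => D ℤ K (f (b i)))
    (φ : ExteriorAlgebra E (KaehlerDifferential ℤ E) →+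
      ExteriorAlgebra K (KaehlerDifferential ℤ K)) (n : ℕ)
    (hφ : ∀ (c : E) (s : Fin n → ι),
      φ (c • ExteriorAlgebra.ιMulti E n fun i => D ℤ E (b (s i))) =
        f c • ExteriorAlgebra.ιMulti K n fun i => D ℤ K (f (b (s i)))) :
    InjOn φ (nForms E n) := by
  rw [Set.injOn_iff_map_eq_zero]
  intro ω hω hφω
  have hmem : ω ∈ Submodule.span E
      (range (ExteriorAlgebra.ιMulti_family E n fun i => D ℤ E (b i))) := by
    rw [exteriorPower.ιMulti_family_span_fixedDegree_of_span E hspan]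
    exact nForms_le_exteriorPower E n hω
  obtain ⟨γ, rfl⟩ := (Submodule.mem_span_range_iff_exists_fun E).1 hmem
  have hindK : LinearIndependent K
      (ExteriorAlgebra.ιMulti_family K n fun i => D ℤ K (f (b i))) :=
    (exteriorPower.ιMulti_family_linearIndependent_field (n := n) hind).map' _
      (Submodule.ker_subtype _)
  have hγ : ∀ s, f (γ s) = 0 := by
    refine Fintype.linearIndependent_iff.1 hindK _ ?_
    simpa only [map_sum, ExteriorAlgebra.ιMulti_family, Function.comp_def, hφ] using hφω
  simp [(map_eq_zero_iff f f.injective).1 (hγ _)]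

theorem kaehler_nforms_injective_of_pBasis_general
    (p : ℕ) [Fact p.Prime] (K : Type) [Field K] [CharP K p]
    (k E : Subfield K) [PerfectField ↥k] (hkE : k ≤ E)
    (r m : ℕ)
    (a : Fin r → K) (haE : ∀ i : Fin r, (i : ℕ) < m → a i ∈ E)
    (hbasisK : Subfield.closure ((k : Set K) ∪ Set.range (frobenius K p) ∪ Set.range a) = ⊤)
    (hdimK : Module.finrank (↥(frobenius K p).fieldRange) K = p ^ r)
    (hbasisE : (E : Set K) ⊆ Subfield.closure
      ((k : Set K) ∪ ((fun x : K => x ^ p) '' (E : Set K)) ∪ (a '' {i : Fin r | (i : ℕ) < m})))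
    (φ : ExteriorAlgebra ↥E (KaehlerDifferential ℤ ↥E) →+
         ExteriorAlgebra K (KaehlerDifferential ℤ K))
    (hφ : ∀ (d : ℕ) (b : ↥E) (c : Fin d → ↥E),
      φ (b • ExteriorAlgebra.ιMulti ↥E d fun i => KaehlerDifferential.D ℤ ↥E (c i)) =
        (b : K) • ExteriorAlgebra.ιMulti K d fun i => KaehlerDifferential.D ℤ K ((c i : K)))
    (n : ℕ) :
    Set.InjOn φ (nForms ↥E n) := by
  let b : {i : Fin r | (i : ℕ) < m} → E := fun i => ⟨a i, haE i i.2⟩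
  have ha : IsPBasis p a :=
    ⟨by rwa [union_eq_right.2 ((Subfield.subset_image_frobenius p k).trans
      (image_subset_range _ _))] at hbasisK, by simpa using hdimK⟩
  refine injOn_nForms_of_linearIndependent E.subtype b ?_ ?_ φ n fun c s => hφ n c (b ∘ s)
  · refine span_range_D_eq_top p b (Subfield.closure_range_frobenius_union_eq_top p k E hkE b ?_)
    rwa [image_eq_range a] at hbasisE
  · exact ha.linearIndependent_D.comp _ Subtype.val_injective

/-- Let `K` be a field of characteristic `p` with `p`-basis `a₁,…,a_r` over a
perfect subfield `k`, and `E ⊆ K` an intermediate field such that `a₁,…,a_m` (`m ≤ r`) form a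
`p`-basis of `E` over `k`.  Then for every `n ≥ 0` the natural map `Ω^n_E → Ω^n_K` induced by
the inclusion (any additive map `φ` sending `b·dc₁∧⋯∧dc_n` with `b, cᵢ ∈ E` to the same form
over `K`) is injective on `n`-forms. -/
theorem kaehler_nforms_injective_of_pBasis
    (p : ℕ) [Fact p.Prime] (K : Type) [Field K] [CharP K p]
    (k E : Subfield K) [PerfectField ↥k] (hkE : k ≤ E)
    (r m : ℕ) (hmr : m ≤ r)
    (a : Fin r → K) (haE : ∀ i : Fin r, (i : ℕ) < m → a i ∈ E)
    (hbasisK : Subfield.closure ((k : Set K) ∪ Set.range (frobenius K p) ∪ Set.range a) = ⊤)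
    (hdimK : Module.finrank (↥(frobenius K p).fieldRange) K = p ^ r)
    (hbasisE : (E : Set K) ⊆ Subfield.closure
      ((k : Set K) ∪ ((fun x : K => x ^ p) '' (E : Set K)) ∪ (a '' {i : Fin r | (i : ℕ) < m})))
    [CharP ↥E p]
    (hdimE : Module.finrank (↥(frobenius ↥E p).fieldRange) ↥E = p ^ m)
    (φ : ExteriorAlgebra ↥E (KaehlerDifferential ℤ ↥E) →+
         ExteriorAlgebra K (KaehlerDifferential ℤ K))
    (hφ : ∀ (d : ℕ) (b : ↥E) (c : Fin d → ↥E),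
      φ (b • ExteriorAlgebra.ιMulti ↥E d fun i => KaehlerDifferential.D ℤ ↥E (c i)) =
        (b : K) • ExteriorAlgebra.ιMulti K d fun i => KaehlerDifferential.D ℤ K ((c i : K)))
    (n : ℕ) :
    Set.InjOn φ (nForms ↥E n) :=
  kaehler_nforms_injective_of_pBasis_general p K k E hkE r m a haE hbasisK hdimK hbasisE φ hφ n
end

section
/- Let E be a field of characteristic p that is C_r (every homogeneous form of degree d in more than d^r variables has a nontrivial zero) with r < n+1. Then the Milne–Kato cohomology group H^{n+1}_p(E) is zero. In particular, if k is algebraically closed of characteristic p and E/k is a field extension of transcendence degree less than n+1, then H^{n+1}_p(E) = 0. -/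
set_option synthInstance.maxHeartbeats 400000
set_option maxHeartbeats 1000000

/-- The subgroup of `n`-forms by which one quotients to obtain `H^{n+1}_p(F)`:
it is generated by the exact forms `dc₀ ∧ dc₁ ∧ ⋯ ∧ dc_{n-1} ∈ dΩ^{n-1}` and by the image of
the Artin–Schreier–Kato operator, `(a^p − a)·(db₁/b₁) ∧ ⋯ ∧ (db_n/b_n)`. -/
noncomputable def hRel (p : ℕ) (F : Type) [Field F] (n : ℕ) :
    AddSubgroup (ExteriorAlgebra F (KaehlerDifferential ℤ F)) :=
  AddSubgroup.closure
    ({x | ∃ c : Fin n → F,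
        x = ExteriorAlgebra.ιMulti F n fun i => KaehlerDifferential.D ℤ F (c i)} ∪
     {x | ∃ (a : F) (b : Fin n → F), (∀ i, b i ≠ 0) ∧
        x = (a ^ p - a) • ExteriorAlgebra.ιMulti F n
          fun i => (b i)⁻¹ • KaehlerDifferential.D ℤ F (b i)})

/-!
Write a generator `b · dc₁ ∧ ⋯ ∧ dcₙ` as `a · ω` with `ω = dlog c₁ ∧ ⋯ ∧ dlog cₙ`, where
`dlog c = c⁻¹ dc`; we may assume the `dlog cₖ` linearly independent, since otherwise `ω = 0`.
Then the monomials `c^I = ∏ cₖ^Iₖ` with `0 ≤ Iₖ < p` are linearly independent over `E^p`: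
differentiating a relation `∑ μᵢ c₀^i = 0` whose coefficients have differentials in the span of
the other `dlog cₖ` yields the shifted relation `∑ (i+1) μᵢ₊₁ c₀^i = 0`. The form
`∑_I c^I X_I^p − a Y^p − Y^(p−1) X₀` of degree `p` in `p^n + 1 > p^r` variables has a nontrivial
zero by `C_r`; independence forces `Y ≠ 0`, and dehomogenizing gives
`a = (x₀^p − x₀) + ∑_{I ≠ 0} x_I^p c^I`. The first term is an Artin–Schreier relation. For
`I ≠ 0` pick `j` with `p ∤ I_j`: since `dlog (x_I^p c^I) = ∑ Iₖ dlog cₖ`, the form `x_I^p c^I · ω`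
is `dc₁ ∧ ⋯ ∧ dt ∧ ⋯ ∧ dcₙ` with `t = x_I^p c^I / (I_j ∏_{k ≠ j} cₖ)` in slot `j`.
-/

open Function Finset

namespace AlternatingMap

variable {R M N ι : Type*} [DecidableEq ι]

theorem map_update_sum_smul [CommSemiring R] [AddCommMonoid M] [Module R M] [AddCommMonoid N]
    [Module R N] [Fintype ι] (f : M [⋀^ι]→ₗ[R] N) (v : ι → M) (i : ι) (e : ι → R) :
    f (update v i (∑ k, e k • v k)) = e i • f v := by
  rw [map_update_sum, Finset.sum_eq_single i]
  · rw [map_update_smul, update_eq_self]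
  · intro k _ hki
    rw [map_update_smul, f.map_eq_zero_of_eq _ (i := i) (j := k) (by simp [hki]) (Ne.symm hki),
      smul_zero]
  · simp

theorem map_update_eq_of_sub_mem_span [Field R] [AddCommGroup M] [Module R M] [AddCommGroup N]
    [Module R N] (f : M [⋀^ι]→ₗ[R] N) (v : ι → M) (i : ι) {x y : M}
    (h : x - y ∈ Submodule.span R (v '' {i}ᶜ)) : f (update v i x) = f (update v i y) := by
  have hdep : ¬LinearIndependent R (update v i (x - y)) := by
    intro hli
    have himage : update v i (x - y) '' {i}ᶜ = v '' {i}ᶜ :=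
      Set.image_congr fun k hk => update_of_ne hk _ _
    have hnot := hli.notMem_span_image (s := {i}ᶜ) (x := i) (by simp)
    rw [update_self, himage] at hnot
    exact hnot h
  rw [← sub_add_cancel x y, map_update_add, f.map_linearDependent _ hdep, zero_add]

end AlternatingMap

section Dlog

variable {E : Type*} [Field E]

local notation "D" => KaehlerDifferential.D ℤ E

noncomputable def dlog (x : E) : Ω[E⁄ℤ] := x⁻¹ • D x

theorem smul_dlog (x : E) : x • dlog x = D x := by
  rcases eq_or_ne x 0 with rfl | hx
  · simp
  · rw [dlog, smul_smul, mul_inv_cancel₀ hx, one_smul]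

theorem dlog_zero : dlog (0 : E) = 0 := by simp [dlog]

theorem dlog_natCast (m : ℕ) : dlog (m : E) = 0 := by
  rw [dlog, Derivation.map_natCast, smul_zero]

theorem dlog_mul {x y : E} (hx : x ≠ 0) (hy : y ≠ 0) : dlog (x * y) = dlog x + dlog y := by
  rw [dlog, dlog, dlog, Derivation.leibniz, mul_inv, smul_add, smul_smul, smul_smul,
    inv_mul_cancel_right₀ hy, mul_comm x⁻¹, inv_mul_cancel_right₀ hx, add_comm]

theorem dlog_prod {ι : Type*} (s : Finset ι) {f : ι → E} (hf : ∀ k ∈ s, f k ≠ 0) :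
    dlog (∏ k ∈ s, f k) = ∑ k ∈ s, dlog (f k) := by
  classical
  induction s using Finset.induction_on with
  | empty => simp [dlog]
  | insert a s ha ih =>
    rw [prod_insert ha, sum_insert ha, dlog_mul (hf a (mem_insert_self a s))
      (prod_ne_zero_iff.2 fun k hk => hf k (mem_insert_of_mem hk)),
      ih fun k hk => hf k (mem_insert_of_mem hk)]

theorem dlog_pow (m : ℕ) {x : E} (hx : x ≠ 0) : dlog (x ^ m) = (m : E) • dlog x := by
  induction m with
  | zero => simp [dlog]
  | succ k ih =>
    rw [pow_succ, dlog_mul (pow_ne_zero k hx) hx, ih, Nat.cast_succ, add_smul, one_smul]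

theorem dlog_prod_pow {ι : Type*} [Fintype ι] {b : ι → E} (hb : ∀ k, b k ≠ 0) (e : ι → ℕ) :
    dlog (∏ k, b k ^ e k) = ∑ k, (e k : E) • dlog (b k) := by
  rw [dlog_prod _ fun k _ => pow_ne_zero _ (hb k)]
  exact sum_congr rfl fun k _ => dlog_pow _ (hb k)

theorem D_prod_pow_mem_span {ι : Type*} [Fintype ι] {b : ι → E} (hb : ∀ k, b k ≠ 0)
    (e : ι → ℕ) : D (∏ k, b k ^ e k) ∈ Submodule.span E (Set.range fun k => dlog (b k)) := by
  rw [← smul_dlog, dlog_prod_pow hb]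
  exact Submodule.smul_mem _ _
    (Submodule.sum_mem _ fun k _ => Submodule.smul_mem _ _ (Submodule.subset_span ⟨k, rfl⟩))

theorem D_sum_mul_pow {x : E} (hx : x ≠ 0) {m : ℕ} (μ : Fin m → E) :
    D (∑ i, μ i * x ^ (i : ℕ)) =
        ∑ i : Fin m, x ^ (i : ℕ) • D (μ i) +
        (∑ i : Fin m, ((i : ℕ) : E) * μ i * x ^ (i : ℕ)) • dlog x := by
  rw [map_sum, sum_smul, ← sum_add_distrib]
  refine sum_congr rfl fun i _ => ?_
  rw [Derivation.leibniz, ← smul_dlog (x ^ _), dlog_pow _ hx, smul_smul, smul_smul, add_comm]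
  congr 2
  ring

theorem AlternatingMap.map_D_eq_prod_smul_map_dlog {ι N : Type*} [Fintype ι] [AddCommGroup N]
    [Module E N] (f : Ω[E⁄ℤ] [⋀^ι]→ₗ[E] N) (c : ι → E) :
    f (fun k => D (c k)) = (∏ k, c k) • f (fun k => dlog (c k)) := by
  simp_rw [← smul_dlog]
  exact f.toMultilinearMap.map_smul_univ c _

theorem AlternatingMap.exists_map_D_eq_smul_map_dlog {n : ℕ} {N : Type*} [AddCommGroup N]
    [Module E N] (f : Ω[E⁄ℤ] [⋀^Fin n]→ₗ[E] N) {b : Fin n → E} (hb : ∀ k, b k ≠ 0)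
    {u : E} (hu : u ≠ 0) {e : Fin n → ℕ} (hdlog : dlog u = ∑ k, (e k : E) • dlog (b k)) {j : Fin n}
    (hj : (e j : E) ≠ 0) :
    ∃ c : Fin n → E, f (fun k => D (c k)) = u • f (fun k => dlog (b k)) := by
  set P := ∏ k ∈ univ.erase j, b k
  have hP : P ≠ 0 := prod_ne_zero_iff.2 fun k _ => hb k
  have hjP : (e j : E) * P ≠ 0 := mul_ne_zero hj hP
  set t := u / ((e j : E) * P)
  have ht : t ≠ 0 := div_ne_zero hu hjP
  have hslot :
      f (update (fun k => dlog (b k)) j (dlog t)) = (e j : E) • f (fun k => dlog (b k)) := by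
    rw [f.map_update_eq_of_sub_mem_span _ j (y := dlog u), hdlog, f.map_update_sum_smul]
    have hu_eq : dlog u = dlog t + dlog ((e j : E) * P) := by
      rw [← dlog_mul ht hjP, div_mul_cancel₀ _ hjP]
    rw [hu_eq, sub_add_cancel_left, dlog_mul hj hP, dlog_natCast, zero_add,
      dlog_prod _ fun k _ => hb k]
    refine Submodule.neg_mem _ (Submodule.sum_mem _ fun k hk => Submodule.subset_span ?_)
    exact ⟨k, ne_of_mem_erase hk, rfl⟩
  refine ⟨update b j t, ?_⟩
  rw [f.map_D_eq_prod_smul_map_dlog, prod_update_of_mem (mem_univ j), sdiff_singleton_eq_erase]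
  simp only [apply_update (fun _ => dlog)]
  rw [hslot, smul_smul]
  congr 1
  rw [mul_assoc, mul_comm _ (e j : E)]
  exact div_mul_cancel₀ u hjP

end Dlog

theorem sum_pow_mul_prod_pow_fin_succ {R : Type*} [CommSemiring R] {p n : ℕ}
    (b : Fin (n + 1) → R) (c : (Fin (n + 1) → Fin p) → R) :
    ∑ I, c I ^ p * ∏ k, b k ^ (I k : ℕ) =
      ∑ i : Fin p, (∑ J, c (Fin.cons i J) ^ p * ∏ k, b k.succ ^ (J k : ℕ)) * b 0 ^ (i : ℕ) := by
  rw [← (Fin.consEquiv fun _ => Fin p).sum_comp, Fintype.sum_prod_type]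
  refine sum_congr rfl fun i _ => ?_
  rw [sum_mul]
  refine sum_congr rfl fun J _ => ?_
  change c (Fin.cons i J) ^ p * ∏ k, b k ^ ((Fin.cons i J : Fin (n + 1) → Fin p) k : ℕ) = _
  rw [Fin.prod_univ_succ, Fin.cons_zero]
  simp only [Fin.cons_succ]
  ring

section CharP

variable {p : ℕ} {E : Type*} [Field E] [CharP E p]

local notation "D" => KaehlerDifferential.D ℤ E

theorem D_pow_char (x : E) : D (x ^ p) = 0 := by
  rw [Derivation.leibniz_pow, ← Nat.cast_smul_eq_nsmul E, CharP.cast_eq_zero, zero_smul]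

theorem dlog_pow_char (x : E) : dlog (x ^ p) = 0 := by
  rw [dlog, D_pow_char, smul_zero]

theorem eq_zero_of_sum_mul_pow_eq_zero {W : Submodule E Ω[E⁄ℤ]} {x : E} (hx : dlog x ∉ W) :
    ∀ {m : ℕ}, m ≤ p → ∀ μ : Fin m → E, (∀ i, D (μ i) ∈ W) →
      ∑ i, μ i * x ^ (i : ℕ) = 0 → μ = 0
  | 0, _, _, _, _ => Subsingleton.elim _ _
  | m + 1, hm, μ, hμ, hsum => by
    have hx0 : x ≠ 0 := by
      rintro rfl
      exact hx (dlog_zero (E := E) ▸ W.zero_mem)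
    have hcoeff : ∑ i : Fin (m + 1), ((i : ℕ) : E) * μ i * x ^ (i : ℕ) = 0 := by
      by_contra hc
      have hD := D_sum_mul_pow hx0 μ
      rw [hsum, map_zero, eq_comm] at hD
      refine hx ((W.smul_mem_iff hc).1 ?_)
      rw [eq_neg_of_add_eq_zero_right hD]
      exact W.neg_mem (W.sum_mem fun i _ => W.smul_mem _ (hμ i))
    set μ' : Fin m → E := fun i => ((i.succ : ℕ) : E) * μ i.succ
    have hsum' : ∑ i, μ' i * x ^ (i : ℕ) = 0 := by
      have h : (∑ i, μ' i * x ^ (i : ℕ)) * x = 0 := by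
        rw [Fin.sum_univ_succ, Fin.val_zero, Nat.cast_zero, zero_mul, zero_mul, zero_add] at hcoeff
        rw [sum_mul, ← hcoeff]
        refine sum_congr rfl fun i _ => ?_
        simp only [μ', Fin.val_succ]
        ring
      exact (mul_eq_zero.1 h).resolve_right hx0
    have hμ' : ∀ i, D (μ' i) ∈ W := fun i => by
      rw [Derivation.leibniz, Derivation.map_natCast, smul_zero, add_zero]
      exact W.smul_mem _ (hμ i.succ)
    have hzero := eq_zero_of_sum_mul_pow_eq_zero hx (by omega) μ' hμ' hsum'
    have hsucc (i : Fin m) : μ i.succ = 0 := by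
      have hcast : ((i.succ : ℕ) : E) ≠ 0 := by
        rw [Ne, CharP.cast_eq_zero_iff E p]
        exact Nat.not_dvd_of_pos_of_lt (Nat.succ_pos i) (by omega)
      exact (mul_eq_zero.1 (congrFun hzero i)).resolve_left hcast
    funext i
    refine Fin.cases ?_ hsucc i
    simpa [Fin.sum_univ_succ, hsucc] using hsum

variable [NeZero p] in
theorem eq_zero_of_sum_pow_mul_prod_pow_eq_zero :
    ∀ {n : ℕ} {b : Fin n → E}, (LinearIndependent E fun k => dlog (b k)) →
      ∀ c : (Fin n → Fin p) → E, ∑ I, c I ^ p * ∏ k, b k ^ (I k : ℕ) = 0 → c = 0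
  | 0, _, _, c, h => by
    funext I
    simpa [Unique.eq_default I, NeZero.ne p] using h
  | n + 1, b, hb, c, h => by
    obtain ⟨hb_tail, hb_zero⟩ := linearIndependent_finSucc.1 hb
    change LinearIndependent E (fun k : Fin n => dlog (b k.succ)) at hb_tail
    change dlog (b 0) ∉ Submodule.span E (Set.range fun k : Fin n => dlog (b k.succ)) at hb_zero
    have hb_ne (k : Fin (n + 1)) : b k ≠ 0 := fun hk => hb.ne_zero k (by rw [hk, dlog_zero])
    have hD (i : Fin p) :
        D (∑ J : Fin n → Fin p, c (Fin.cons i J) ^ p * ∏ k, b k.succ ^ (J k : ℕ)) ∈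
          Submodule.span E (Set.range fun k : Fin n => dlog (b k.succ)) := by
      rw [map_sum]
      refine Submodule.sum_mem _ fun J _ => ?_
      rw [Derivation.leibniz, D_pow_char, smul_zero, add_zero]
      exact Submodule.smul_mem _ _
        (D_prod_pow_mem_span (b := fun k : Fin n => b k.succ) (fun k => hb_ne k.succ) _)
    rw [sum_pow_mul_prod_pow_fin_succ] at h
    have hμ := eq_zero_of_sum_mul_pow_eq_zero hb_zero le_rfl _ hD h
    funext I
    rw [← Fin.cons_self_tail I]
    exact congrFun (eq_zero_of_sum_pow_mul_prod_pow_eq_zero hb_tail _ (congrFun hμ (I 0)))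
      (Fin.tail I)

end CharP

def IsCr (r : ℕ) (E : Type*) [Field E] : Prop :=
  ∀ (d m : ℕ), 0 < d → d ^ r < m →
    ∀ f : MvPolynomial (Fin m) E, f.IsHomogeneous d →
      ∃ v : Fin m → E, v ≠ 0 ∧ MvPolynomial.eval v f = 0

theorem IsCr.exists_ne_zero_eval_eq_zero {r : ℕ} {E : Type*} [Field E] (hE : IsCr r E)
    {σ : Type*} [Fintype σ] {d : ℕ} (hd : 0 < d) (hσ : d ^ r < Fintype.card σ)
    {f : MvPolynomial σ E} (hf : f.IsHomogeneous d) :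
    ∃ v : σ → E, v ≠ 0 ∧ MvPolynomial.eval v f = 0 := by
  let e := Fintype.equivFin σ
  obtain ⟨v, hv, hvf⟩ := hE d _ hd hσ (MvPolynomial.rename e f) hf.rename_isHomogeneous
  refine ⟨v ∘ e, fun h => hv ?_, by rwa [MvPolynomial.eval_rename] at hvf⟩
  funext i
  simpa using congrFun h (e.symm i)

section Form

open MvPolynomial

variable (p : ℕ) [NeZero p] {E : Type*} [Field E] {n : ℕ}

noncomputable def artinSchreierForm (a : E) (b : Fin n → E) :
    MvPolynomial (Option (Fin n → Fin p)) E :=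
  ∑ I, X (some I) ^ p * C (∏ k, b k ^ (I k : ℕ)) - C a * X none ^ p -
    X none ^ (p - 1) * X (some 0)

theorem artinSchreierForm_isHomogeneous (a : E) (b : Fin n → E) :
    (artinSchreierForm p a b).IsHomogeneous p := by
  refine .sub (.sub (.sum _ _ _ fun I _ => ?_) (isHomogeneous_C_mul_X_pow _ _ _)) ?_
  · simpa [mul_comm] using isHomogeneous_C_mul_X_pow (∏ k, b k ^ (I k : ℕ)) (some I) p
  · simpa [Nat.sub_add_cancel (NeZero.one_le (n := p))] using
      (isHomogeneous_X_pow (R := E) none (p - 1)).mul (isHomogeneous_X E (some 0))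

theorem eval_artinSchreierForm (a : E) (b : Fin n → E) (v : Option (Fin n → Fin p) → E) :
    eval v (artinSchreierForm p a b) = ∑ I, v (some I) ^ p * ∏ k, b k ^ (I k : ℕ) -
      a * v none ^ p - v none ^ (p - 1) * v (some 0) := by
  simp [artinSchreierForm]

end Form

theorem IsCr.exists_sum_pow_mul_prod_pow_sub_eq {p : ℕ} [NeZero p] {E : Type*} [Field E]
    [CharP E p] {r n : ℕ} (hE : IsCr r E) (hr : r ≤ n) {b : Fin n → E}
    (hb : LinearIndependent E fun k => dlog (b k)) (a : E) :
    ∃ c : (Fin n → Fin p) → E, ∑ I, c I ^ p * ∏ k, b k ^ (I k : ℕ) - c 0 = a := by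
  have hp := NeZero.one_le (n := p)
  have hcard : p ^ r < Fintype.card (Option (Fin n → Fin p)) := by
    simp only [Fintype.card_option, Fintype.card_fun, Fintype.card_fin]
    exact Nat.lt_succ_of_le (Nat.pow_le_pow_right hp hr)
  obtain ⟨v, hv, hzero⟩ :=
    hE.exists_ne_zero_eval_eq_zero hp hcard (artinSchreierForm_isHomogeneous p a b)
  rw [eval_artinSchreierForm] at hzero
  set y := v none
  have hy : y ≠ 0 := by
    intro hy
    have hp1 := CharP.char_ne_one E p
    rw [hy, zero_pow (NeZero.ne p), zero_pow (by omega), mul_zero, zero_mul, sub_zero,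
      sub_zero] at hzero
    have hsome := eq_zero_of_sum_pow_mul_prod_pow_eq_zero hb _ hzero
    refine hv (funext fun o => ?_)
    cases o with
    | none => exact hy
    | some I => exact congrFun hsome I
  refine ⟨fun I => v (some I) / y, mul_left_cancel₀ (pow_ne_zero p hy) ?_⟩
  have hy_pow : y ^ p = y ^ (p - 1) * y := by rw [← pow_succ, Nat.sub_add_cancel hp]
  rw [mul_sub, mul_sum]
  simp only [div_pow, ← mul_assoc, mul_div_cancel₀ _ (pow_ne_zero p hy)]
  rw [hy_pow, mul_assoc, mul_div_cancel₀ _ hy]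
  linear_combination hzero + a * hy_pow

section Relations

variable {p : ℕ} {E : Type} [Field E] {n : ℕ}

local notation "D" => KaehlerDifferential.D ℤ E

theorem ιMulti_D_mem_hRel (c : Fin n → E) :
    ExteriorAlgebra.ιMulti E n (fun k => D (c k)) ∈ hRel p E n :=
  AddSubgroup.subset_closure (Or.inl ⟨c, rfl⟩)

theorem pow_sub_smul_ιMulti_dlog_mem_hRel (a : E) {b : Fin n → E} (hb : ∀ k, b k ≠ 0) :
    (a ^ p - a) • ExteriorAlgebra.ιMulti E n (fun k => dlog (b k)) ∈ hRel p E n :=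
  AddSubgroup.subset_closure (Or.inr ⟨a, b, hb, rfl⟩)

variable [CharP E p] [NeZero p]

theorem pow_mul_prod_pow_smul_ιMulti_dlog_mem_hRel {b : Fin n → E} (hb : ∀ k, b k ≠ 0)
    (c : E) {I : Fin n → Fin p} (hI : I ≠ 0) :
    (c ^ p * ∏ k, b k ^ (I k : ℕ)) • ExteriorAlgebra.ιMulti E n (fun k => dlog (b k)) ∈
      hRel p E n := by
  rcases eq_or_ne c 0 with rfl | hc
  · simp [NeZero.ne p]
  obtain ⟨j, hj⟩ := Function.ne_iff.1 hI
  have hj_cast : ((I j : ℕ) : E) ≠ 0 := by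
    rw [Ne, CharP.cast_eq_zero_iff E p]
    exact Nat.not_dvd_of_pos_of_lt (Nat.pos_of_ne_zero fun h => hj (Fin.ext h)) (I j).isLt
  have hprod : ∏ k, b k ^ (I k : ℕ) ≠ 0 := prod_ne_zero_iff.2 fun k _ => pow_ne_zero _ (hb k)
  have hdlog : dlog (c ^ p * ∏ k, b k ^ (I k : ℕ)) = ∑ k, ((I k : ℕ) : E) • dlog (b k) := by
    rw [dlog_mul (pow_ne_zero p hc) hprod, dlog_pow_char, zero_add, dlog_prod_pow hb]
  obtain ⟨c', hc'⟩ := (ExteriorAlgebra.ιMulti E n).exists_map_D_eq_smul_map_dlog hb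
    (mul_ne_zero (pow_ne_zero p hc) hprod) hdlog hj_cast
  exact hc' ▸ ιMulti_D_mem_hRel c'

theorem IsCr.smul_ιMulti_dlog_mem_hRel {r : ℕ} (hE : IsCr r E) (hr : r ≤ n)
    (a : E) (b : Fin n → E) :
    a • ExteriorAlgebra.ιMulti E n (fun k => dlog (b k)) ∈ hRel p E n := by
  by_cases hb : LinearIndependent E fun k => dlog (b k)
  swap
  · rw [AlternatingMap.map_linearDependent _ _ hb, smul_zero]
    exact zero_mem _
  have hb_ne (k : Fin n) : b k ≠ 0 := fun hk => hb.ne_zero k (by rw [hk, dlog_zero])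
  obtain ⟨c, rfl⟩ := hE.exists_sum_pow_mul_prod_pow_sub_eq (p := p) hr hb a
  rw [← add_sum_erase _ _ (mem_univ 0), add_sub_right_comm, add_smul, sum_smul]
  refine add_mem ?_ (sum_mem fun I hI =>
    pow_mul_prod_pow_smul_ιMulti_dlog_mem_hRel hb_ne (c I) (ne_of_mem_erase hI))
  simpa using pow_sub_smul_ιMulti_dlog_mem_hRel (p := p) (c 0) hb_ne

end Relations

/-- Let `E` be a field of characteristic `p` which is `C_r` (every homogeneous
form of degree `d` in more than `d^r` variables has a nontrivial zero) with `r < n + 1`.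
Then the Milne–Kato cohomology group `H^{n+1}_p(E)` vanishes, i.e. every `n`-form lies in
the subgroup of relations defining `H^{n+1}_p(E)`. -/
theorem milne_kato_vanishes_of_Cr
    (p : ℕ) [Fact p.Prime] (E : Type) [Field E] [CharP E p]
    (r n : ℕ) (hr : r < n + 1)
    (hCr : ∀ (d m : ℕ), 0 < d → d ^ r < m →
      ∀ f : MvPolynomial (Fin m) E, f.IsHomogeneous d →
        ∃ v : Fin m → E, v ≠ 0 ∧ MvPolynomial.eval v f = 0) :
    nForms E n ≤ hRel p E n := by
  rw [nForms, AddSubgroup.closure_le]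
  rintro _ ⟨a, c, rfl⟩
  rw [SetLike.mem_coe, AlternatingMap.map_D_eq_prod_smul_map_dlog, smul_smul]
  exact IsCr.smul_ιMulti_dlog_mem_hRel hCr (Nat.lt_succ_iff.1 hr) _ c
end

section
/- Let k be a perfect field of characteristic p, (K, v) a valued field of characteristic p with v geometric of rank 1 over k, trdeg_k(K) = r, and residue field K̄ with [K̄ : K̄^p] = p^{r-1}. Given any chain of degree-p purely inseparable extensions K^p = F_0 ⊂ F_1 ⊂ ... ⊂ F_r = K, exactly one of the residue field extensions F̄_{i-1} ⊆ F̄_i is trivial and the remaining r−1 are of degree p. -/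
/-!
Write `F̄` for the image of `A ∩ F` in the residue field `K̄`. Since `y ∈ A` as soon as
`y ^ p ∈ A`, taking residues turns the chain into `K̄^p = F̄₀ ⊆ ⋯ ⊆ F̄_r = K̄`. Each step has
degree at most `[F_i : F_{i-1}] = p`: lifts of residues that are linearly independent over
`F̄_{i-1}` are linearly independent over `F_{i-1}`, because dividing a relation by its
coefficient of largest valuation and reducing gives a residual relation with a coefficient `1`.
By the tower law the step degrees multiply to `[K̄ : K̄^p] = p^(r-1)`, so each is `1` or `p`,
exactly `r - 1` of them are `p`, and exactly one is `1`.
-/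

open IsLocalRing Finset

namespace Subfield

variable {E : Type*} [Field E]

theorem relfinrank_eq_finrank_inclusion {A B : Subfield E} (h : A ≤ B) :
    relfinrank A B = letI := (inclusion h).toAlgebra; Module.finrank A B := by
  rw [relfinrank_eq_finrank_of_le h]
  rfl

theorem prod_relfinrank_chain {m : ℕ} (G : Fin (m + 1) → Subfield E) (hG : Monotone G) :
    ∏ i : Fin m, relfinrank (G i.castSucc) (G i.succ) = relfinrank (G 0) (G (Fin.last m)) := by
  induction m with
  | zero => simp
  | succ m ih =>
    have := ih (fun j => G j.castSucc) (hG.comp Fin.strictMono_castSucc.monotone)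
    simp only [Fin.castSucc_zero] at this
    simp_rw [Fin.prod_univ_castSucc, Fin.succ_castSucc, this, Fin.succ_last]
    exact relfinrank_mul_relfinrank (hG (Fin.zero_le _)) (hG (Fin.castSucc_le_succ _))

end Subfield

theorem Nat.existsUnique_eq_one_of_prod_eq_prime_pow {ι : Type*} [Fintype ι] {p n : ℕ}
    (hp : p.Prime) (hι : Fintype.card ι = n + 1) (d : ι → ℕ) (hd : ∀ i, d i ≤ p)
    (hprod : ∏ i, d i = p ^ n) : (∃! i, d i = 1) ∧ ∀ i, d i ≠ 1 → d i = p := by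
  have hd_ne : ∀ i, d i ≠ 1 → d i = p := by
    intro i hi
    obtain ⟨k, -, hdk⟩ := (Nat.dvd_prime_pow hp).mp (hprod ▸ dvd_prod_of_mem d (mem_univ i))
    have : k ≤ 1 := (Nat.pow_le_pow_iff_right hp.one_lt).mp (by simpa [← hdk] using hd i)
    interval_cases k <;> simp_all
  classical
  have hcard : #{i | d i ≠ 1} = n := by
    refine Nat.pow_right_injective hp.two_le ?_
    calc p ^ #{i | d i ≠ 1} = ∏ i with d i ≠ 1, d i := by
          rw [prod_congr rfl fun i hi => hd_ne i (mem_filter.mp hi).2, prod_const]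
      _ = ∏ i, d i := by
          refine prod_subset (filter_subset _ _) fun i _ hi => ?_
          simpa using hi
      _ = p ^ n := hprod
  refine ⟨?_, hd_ne⟩
  rw [Fintype.existsUnique_iff_card_one]
  have := card_filter_add_card_filter_not (s := univ) (fun i => d i = 1)
  simp only [Finset.card_univ, hι, ← ne_eq, hcard] at this
  omega

namespace ValuationSubring

variable {K : Type*} [Field K] (A : ValuationSubring K)

theorem exists_div_mem_of_ne_zero {ι : Type*} [Finite ι] {c : ι → K} (hc : c ≠ 0) :
    ∃ j, c j ≠ 0 ∧ ∀ i, c i / c j ∈ A := by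
  obtain ⟨i₀, hi₀⟩ := Function.ne_iff.mp hc
  have : Nonempty ι := ⟨i₀⟩
  obtain ⟨j, hj⟩ := Finite.exists_max fun i => A.valuation (c i)
  have hcj : c j ≠ 0 := fun h0 => hi₀ <| by simpa [h0] using hj i₀
  refine ⟨j, hcj, fun i => ?_⟩
  rw [← valuation_le_one_iff, map_div₀]
  exact div_le_one_of_le₀ (hj i) zero_le

noncomputable def residueSubfield (F : Subfield K) : Subfield (ResidueField A) where
  toSubring := (Subring.comap A.subtype F.toSubring).map (residue A)
  inv_mem' := by
    rintro _ ⟨a, haF, rfl⟩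
    by_cases ha : IsUnit a
    · refine ⟨↑ha.unit⁻¹, ?_, map_units_inv (residue A) ha.unit⟩
      change A.subtype _ ∈ F
      rw [map_units_inv A.subtype ha.unit]
      exact F.inv_mem haF
    · rw [(residue_eq_zero_iff a).mpr ha, inv_zero]
      exact Subring.zero_mem _

variable {A}

theorem residueSubfield_mono {F F' : Subfield K} (h : F ≤ F') :
    A.residueSubfield F ≤ A.residueSubfield F' := by
  rintro _ ⟨a, haF, rfl⟩
  exact ⟨a, h haF, rfl⟩

@[simp]
theorem residueSubfield_top : A.residueSubfield ⊤ = ⊤ :=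
  top_unique fun x _ => ⟨_, trivial, (residue_surjective x).choose_spec⟩

theorem residueSubfield_frobenius_fieldRange (p : ℕ) [ExpChar K p] [ExpChar (ResidueField A) p] :
    A.residueSubfield (frobenius K p).fieldRange = (frobenius (ResidueField A) p).fieldRange := by
  apply le_antisymm
  · rintro _ ⟨a, ⟨y, hy⟩, rfl⟩
    have hyA : y ∈ A := by
      rw [← valuation_le_one_iff, ← pow_le_one_iff (expChar_pos K p).ne', ← map_pow,
        ← frobenius_def, hy]
      exact A.valuation_le_one a
    refine ⟨residue A ⟨y, hyA⟩, ?_⟩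
    rw [frobenius_def, ← map_pow]
    congr 1
    exact Subtype.ext hy
  · rintro _ ⟨z, rfl⟩
    obtain ⟨b, rfl⟩ := residue_surjective z
    exact ⟨b ^ p, ⟨b, rfl⟩, by simp [frobenius_def]⟩

theorem linearIndependent_of_linearIndependent_residue {ι : Type*} {F : Subfield K} {a : ι → A}
    (h : LinearIndependent (A.residueSubfield F) fun i => residue A (a i)) :
    LinearIndependent F fun i => (a i : K) := by
  rw [linearIndependent_iff_finset_linearIndependent] at h ⊢
  intro s
  specialize h s
  rw [Fintype.linearIndependent_iff] at h ⊢
  simp only [Function.comp_apply] at h ⊢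
  intro g hg
  by_contra hne
  obtain ⟨j, hgj, hdiv⟩ := A.exists_div_mem_of_ne_zero (c := fun i => (g i : K))
    fun h0 => hne fun i => Subtype.ext (congrFun h0 i)
  let d : s → A := fun i => ⟨_, hdiv i⟩
  have hd : ∑ i, d i * a i = 0 := by
    apply Subtype.ext
    calc ((∑ i, d i * a i : A) : K) = (g j : K)⁻¹ * ∑ i, g i • (a i : K) := by
          push_cast
          rw [mul_sum]
          exact sum_congr rfl fun i _ => by
            simp [d, div_eq_inv_mul, mul_assoc, Subfield.smul_def]
      _ = 0 := by rw [hg, mul_zero]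
  let e : s → A.residueSubfield F := fun i =>
    ⟨residue A (d i), d i, F.div_mem (g i).2 (g j).2, rfl⟩
  have he : ∑ i, e i • residue A (a i) = 0 := by
    simpa [e, Subfield.smul_def, ← map_mul, ← map_sum] using congrArg (residue A) hd
  have hej : e j = 1 := Subtype.ext <| by
    change residue A (d j) = 1
    rw [show d j = 1 from Subtype.ext (div_self hgj), map_one]
  exact one_ne_zero (hej ▸ h e he j)

theorem relrank_residueSubfield_le {F F' : Subfield K} (h : F ≤ F') :
    (A.residueSubfield F).relrank (A.residueSubfield F') ≤ F.relrank F' := by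
  rw [Subfield.relrank_eq_rank_of_le h, Subfield.relrank_eq_rank_of_le (residueSubfield_mono h),
    Module.rank_def]
  refine ciSup_le' fun ⟨s, hs⟩ => ?_
  choose a haF' ha using fun x : s => (x.1 : Subfield.extendScalars (residueSubfield_mono h)).2
  let b : s → Subfield.extendScalars h := fun x => ⟨a x, haF' x⟩
  have hb : LinearIndependent F b := by
    refine .of_comp (IntermediateField.val _).toLinearMap ?_
    refine linearIndependent_of_linearIndependent_residue ?_
    simp only [ha]
    exact hs.linearIndependent.map' (IntermediateField.val _).toLinearMap
      (LinearMap.ker_eq_bot_of_injective Subtype.val_injective)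
  exact hb.cardinal_le_rank

theorem relfinrank_residueSubfield_le {F F' : Subfield K} (h : F ≤ F')
    (hfin : F.relfinrank F' ≠ 0) :
    (A.residueSubfield F).relfinrank (A.residueSubfield F') ≤ F.relfinrank F' :=
  Cardinal.toNat_le_toNat (relrank_residueSubfield_le h) (Cardinal.toNat_ne_zero.mp hfin).2

end ValuationSubring

theorem chain_residue_extensions_one_trivial_general
    (p r : ℕ) [Fact p.Prime] (hr : 0 < r)
    (K : Type) [Field K] [CharP K p]
    (A : ValuationSubring K)
    [CharP (IsLocalRing.ResidueField ↥A) p]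
    (hres : Module.finrank (↥(frobenius (IsLocalRing.ResidueField ↥A) p).fieldRange)
      (IsLocalRing.ResidueField ↥A) = p ^ (r - 1))
    (F : Fin (r + 1) → Subfield K)
    (hF0 : F 0 = (frobenius K p).fieldRange)
    (hFr : F (Fin.last r) = ⊤)
    (hmono : ∀ i : Fin r, F i.castSucc ≤ F i.succ)
    (hdeg : ∀ i : Fin r, ∀ h : F i.castSucc ≤ F i.succ,
      letI : Algebra ↥(F i.castSucc) ↥(F i.succ) := (Subfield.inclusion h).toAlgebra
      Module.finrank ↥(F i.castSucc) ↥(F i.succ) = p) :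
    -- the chain of residue subrings
    (∃! i₀ : Fin r,
      Subring.map (IsLocalRing.residue ↥A) (Subring.comap A.subtype (F i₀.castSucc).toSubring)
        = Subring.map (IsLocalRing.residue ↥A)
            (Subring.comap A.subtype (F i₀.succ).toSubring)) ∧
    (∀ i : Fin r,
      Subring.map (IsLocalRing.residue ↥A) (Subring.comap A.subtype (F i.castSucc).toSubring)
        ≠ Subring.map (IsLocalRing.residue ↥A)
            (Subring.comap A.subtype (F i.succ).toSubring) →
      ∀ h : Subring.map (IsLocalRing.residue ↥A)
              (Subring.comap A.subtype (F i.castSucc).toSubring)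
            ≤ Subring.map (IsLocalRing.residue ↥A)
              (Subring.comap A.subtype (F i.succ).toSubring),
        letI := (Subring.inclusion h).toAlgebra
        Module.finrank
          ↥(Subring.map (IsLocalRing.residue ↥A)
              (Subring.comap A.subtype (F i.castSucc).toSubring))
          ↥(Subring.map (IsLocalRing.residue ↥A)
              (Subring.comap A.subtype (F i.succ).toSubring)) = p) := by
  have hp : p.Prime := Fact.out
  set E : Fin (r + 1) → Subfield (IsLocalRing.ResidueField ↥A) := fun i =>
    A.residueSubfield (F i)
  have hEmono : Monotone E := fun i j hij =>
    ValuationSubring.residueSubfield_mono (Fin.monotone_iff_le_succ.mpr hmono hij)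
  have hFdeg : ∀ i : Fin r, (F i.castSucc).relfinrank (F i.succ) = p := fun i => by
    rw [Subfield.relfinrank_eq_finrank_inclusion (hmono i)]
    exact hdeg i (hmono i)
  have hEdeg : ∀ i : Fin r, (E i.castSucc).relfinrank (E i.succ) ≤ p := fun i =>
    (ValuationSubring.relfinrank_residueSubfield_le (hmono i) (hFdeg i ▸ hp.ne_zero)).trans_eq
      (hFdeg i)
  have hprod : ∏ i : Fin r, (E i.castSucc).relfinrank (E i.succ) = p ^ (r - 1) := by
    rw [Subfield.prod_relfinrank_chain E hEmono]
    simp only [E, hF0, hFr, ValuationSubring.residueSubfield_frobenius_fieldRange,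
      ValuationSubring.residueSubfield_top, Subfield.relfinrank_top_right, hres]
  have htriv : ∀ i : Fin r, (E i.castSucc).relfinrank (E i.succ) = 1 ↔
      (E i.castSucc).toSubring = (E i.succ).toSubring := fun i => by
    rw [Subfield.relfinrank_eq_one_iff]
    exact ⟨fun h => le_antisymm (hEmono i.castSucc_le_succ) h, fun h => h.ge⟩
  obtain ⟨hone, hother⟩ := Nat.existsUnique_eq_one_of_prod_eq_prime_pow hp
    (by rw [Fintype.card_fin]; omega) _ hEdeg hprod
  refine ⟨(existsUnique_congr htriv).mp hone, fun i hne h => ?_⟩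
  exact (Subfield.relfinrank_eq_finrank_inclusion (hEmono i.castSucc_le_succ)).symm.trans
    (hother i (mt (htriv i).mp hne))

/-- Let `k` be a perfect field of characteristic `p`, `(K, v)` a valued field
of characteristic `p` with `v` geometric of rank 1 over `k` (a DVR valuation subring `A`
containing `k` whose residue field `K̄` has transcendence degree `r - 1` over `k`),
`trdeg_k K = r` and `[K̄ : K̄^p] = p^(r-1)`.  Given any chain of degree-`p` purely inseparable
extensions `K^p = F₀ ⊂ F₁ ⊂ ⋯ ⊂ F_r = K`, exactly one of the residue field extensions
`F̄_{i-1} ⊆ F̄_i` is trivial and the remaining `r - 1` are of degree `p`.  Here `F̄_i` is the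
image in the residue field of `A ∩ F_i`. -/
theorem chain_residue_extensions_one_trivial
    (p r : ℕ) [Fact p.Prime] (hr : 0 < r)
    (K : Type) [Field K] [CharP K p]
    (k : Subfield K) [PerfectField ↥k]
    (A : ValuationSubring K) [IsDiscreteValuationRing ↥A]
    [CharP (IsLocalRing.ResidueField ↥A) p]
    (hkA : (k : Set K) ⊆ (A : Set K))
    (trK : ∃ x : Fin r → K, IsTranscendenceBasis ↥k x)
    (trκ :
      letI : Algebra ↥k (IsLocalRing.ResidueField ↥A) :=
        ((IsLocalRing.residue ↥A).comp
          ((k.subtype).codRestrict A.toSubring fun c => hkA c.2)).toAlgebra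
      ∃ x : Fin (r - 1) → IsLocalRing.ResidueField ↥A, IsTranscendenceBasis ↥k x)
    (hKp : Module.finrank (↥(frobenius K p).fieldRange) K = p ^ r)
    (hres : Module.finrank (↥(frobenius (IsLocalRing.ResidueField ↥A) p).fieldRange)
      (IsLocalRing.ResidueField ↥A) = p ^ (r - 1))
    (F : Fin (r + 1) → Subfield K)
    (hF0 : F 0 = (frobenius K p).fieldRange)
    (hFr : F (Fin.last r) = ⊤)
    (hmono : ∀ i : Fin r, F i.castSucc ≤ F i.succ)
    (hdeg : ∀ i : Fin r, ∀ h : F i.castSucc ≤ F i.succ,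
      letI : Algebra ↥(F i.castSucc) ↥(F i.succ) := (Subfield.inclusion h).toAlgebra
      Module.finrank ↥(F i.castSucc) ↥(F i.succ) = p) :
    -- the chain of residue subrings
    (∃! i₀ : Fin r,
      Subring.map (IsLocalRing.residue ↥A) (Subring.comap A.subtype (F i₀.castSucc).toSubring)
        = Subring.map (IsLocalRing.residue ↥A)
            (Subring.comap A.subtype (F i₀.succ).toSubring)) ∧
    (∀ i : Fin r,
      Subring.map (IsLocalRing.residue ↥A) (Subring.comap A.subtype (F i.castSucc).toSubring)
        ≠ Subring.map (IsLocalRing.residue ↥A)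
            (Subring.comap A.subtype (F i.succ).toSubring) →
      ∀ h : Subring.map (IsLocalRing.residue ↥A)
              (Subring.comap A.subtype (F i.castSucc).toSubring)
            ≤ Subring.map (IsLocalRing.residue ↥A)
              (Subring.comap A.subtype (F i.succ).toSubring),
        letI := (Subring.inclusion h).toAlgebra
        Module.finrank
          ↥(Subring.map (IsLocalRing.residue ↥A)
              (Subring.comap A.subtype (F i.castSucc).toSubring))
          ↥(Subring.map (IsLocalRing.residue ↥A)
              (Subring.comap A.subtype (F i.succ).toSubring)) = p) :=
  chain_residue_extensions_one_trivial_general p r hr K A hres F hF0 hFr hmono hdeg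
end
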